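/- arXiv:math/0207223 — 2 statements merged into one kernel-verified Lean document; each statement's English description precedes it below -/
import Mathlib

section
/- A subset $A$ of a manifold $M$ is slim if and only if every point $x \in A$ has an open neighborhood $U$ in $M$ such that $U \cap A$ is slim. -/
open MeasureTheory

/-- The Lebesgue covering dimension of `X` is at most `n`: every open cover has an
open refinement of order at most `n + 1`. -/
def CovDimLE (X : Type) [TopologicalSpace X] (n : ℕ) : Prop :=
  ∀ (ι : Type) (U : ι → Set X), (∀ i, IsOpen (U i)) → (⋃ i, U i) = Set.univ →
    ∃ (κ : Type) (V : κ → Set X), (∀ j, IsOpen (V j)) ∧ (⋃ j, V j) = Set.univ ∧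
      (∀ j, ∃ i, V j ⊆ U i) ∧ ∀ x : X, {j | x ∈ V j}.encard ≤ n + 1

/-- A subset `A` of a `dM`-dimensional manifold `M` carrying the measure `μ` is
*slim* if it can be covered by countably many closed sets of `μ`-measure zero whose
topological (covering) dimension is at most `dM - 2`. -/
def Slim {M : Type} [TopologicalSpace M] [MeasurableSpace M]
    (μ : Measure M) (dM : ℕ) (A : Set M) : Prop :=
  ∃ F : ℕ → Set M,
    (∀ n, IsClosed (F n) ∧ μ (F n) = 0 ∧ CovDimLE (F n) (dM - 2)) ∧ A ⊆ ⋃ n, F n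

/- Slim sets form a σ-ideal, and in a hereditarily Lindelöf space every σ-ideal of sets is
local: the neighbourhoods witnessing local slimness of `A` have a countable subcover of `A`. -/

theorem covDimLE_empty {X : Type} [TopologicalSpace X] (n : ℕ) :
    CovDimLE (∅ : Set X) n :=
  fun ι U hU hcov ↦ ⟨ι, U, hU, hcov, fun j ↦ ⟨j, subset_rfl⟩, fun x ↦ x.2.elim⟩

namespace Slim

variable {M : Type} [TopologicalSpace M] [MeasurableSpace M] {μ : Measure M} {dM : ℕ}

theorem mono {A B : Set M} (hAB : A ⊆ B) (hB : Slim μ dM B) : Slim μ dM A :=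
  let ⟨F, hF, hBF⟩ := hB
  ⟨F, hF, hAB.trans hBF⟩

theorem empty : Slim μ dM (∅ : Set M) :=
  ⟨fun _ ↦ ∅, fun _ ↦ ⟨isClosed_empty, measure_empty, covDimLE_empty _⟩, Set.empty_subset _⟩

theorem iUnion_nat {s : ℕ → Set M} (h : ∀ n, Slim μ dM (s n)) : Slim μ dM (⋃ n, s n) := by
  choose F hF hs using h
  refine ⟨fun k ↦ F k.unpair.1 k.unpair.2, fun k ↦ hF _ _, fun x hx ↦ ?_⟩
  obtain ⟨n, hn⟩ := Set.mem_iUnion.1 hx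
  obtain ⟨m, hm⟩ := Set.mem_iUnion.1 (hs n hn)
  exact Set.mem_iUnion.2 ⟨Nat.pair n m, by simpa using hm⟩

theorem iUnion {ι : Type*} [Countable ι] {s : ι → Set M} (h : ∀ i, Slim μ dM (s i)) :
    Slim μ dM (⋃ i, s i) := by
  rcases isEmpty_or_nonempty ι with hι | hι
  · simpa only [Set.iUnion_of_empty] using empty
  · obtain ⟨f, hf⟩ := exists_surjective_nat ι
    rw [← hf.iUnion_comp]
    exact iUnion_nat fun n ↦ h (f n)

theorem biUnion {ι : Type*} {t : Set ι} (ht : t.Countable) {s : ι → Set M}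
    (h : ∀ i ∈ t, Slim μ dM (s i)) : Slim μ dM (⋃ i ∈ t, s i) := by
  have := ht.to_subtype
  rw [Set.biUnion_eq_iUnion]
  exact iUnion fun i ↦ h i i.2

theorem of_forall_nhds [HereditarilyLindelofSpace M] {A : Set M}
    (h : ∀ x ∈ A, ∃ U ∈ nhds x, Slim μ dM (U ∩ A)) : Slim μ dM A := by
  choose! U hU hUA using h
  obtain ⟨t, htc, htA, hAt⟩ := (HereditarilyLindelofSpace.isLindelof A).elim_nhds_subcover U hU
  refine (biUnion htc fun x hx ↦ hUA x (htA x hx)).mono fun x hx ↦ ?_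
  obtain ⟨y, hyt, hxy⟩ := Set.mem_iUnion₂.1 (hAt hx)
  exact Set.mem_iUnion₂.2 ⟨y, hyt, hxy, hx⟩

end Slim

theorem stmt_7_general (d : ℕ) (M : Type) [TopologicalSpace M]
    [SecondCountableTopology M]
    [MeasurableSpace M] (μ : Measure M) (A : Set M) :
    Slim μ d A ↔ ∀ x ∈ A, ∃ U : Set M, IsOpen U ∧ x ∈ U ∧ Slim μ d (U ∩ A) := by
  refine ⟨fun hA x _ ↦ ⟨Set.univ, isOpen_univ, Set.mem_univ x, hA.mono Set.inter_subset_right⟩,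
    fun h ↦ Slim.of_forall_nhds fun x hx ↦ ?_⟩
  obtain ⟨U, hUo, hxU, hU⟩ := h x hx
  exact ⟨U, hUo.mem_nhds hxU, hU⟩

/-- Locality: A subset `A` of a manifold `M` is slim iff every point
`x ∈ A` has an open neighborhood `U` in `M` with `U ∩ A` slim. -/
theorem stmt_7 (d : ℕ) (M : Type) [TopologicalSpace M] [T2Space M]
    [SecondCountableTopology M]
    [ChartedSpace (EuclideanSpace ℝ (Fin d)) M]
    [MeasurableSpace M] [BorelSpace M] (μ : Measure M) (A : Set M) :
    Slim μ d A ↔ ∀ x ∈ A, ∃ U : Set M, IsOpen U ∧ x ∈ U ∧ Slim μ d (U ∩ A) :=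
  stmt_7_general d M μ A
end

section
/- Let $R$ be an orthogonal linear map on $\mathbb{R}^d$, let $K$ be a positive semi-definite symmetric operator on a subspace, and let $V_1$ be a linear map into that subspace. For $n^- = (z,w)$ and $n^+ = (Rz - 2\cos\phi\, V_1^* K V_1 R w,\, Rw)$ with $\cos\phi \ge 0$, one has $Q(n^+) = Q(n^-) - 2\cos\phi\, \langle K V_1 R w, V_1 R w\rangle \le Q(n^-)$, where $Q(z,w) = \langle z,w\rangle$. -/
open scoped RealInnerProductSpace

section CollisionLaw

variable {E F : Type*} [NormedAddCommGroup E] [InnerProductSpace ℝ E] [FiniteDimensional ℝ E]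
  [NormedAddCommGroup F] [InnerProductSpace ℝ F] [FiniteDimensional ℝ F]

theorem inner_map_sub_smul_adjoint_eq (R : E ≃ₗᵢ[ℝ] E) (K : F →ₗ[ℝ] F) (V : E →ₗ[ℝ] F)
    (c : ℝ) (z w : E) :
    ⟪R z - c • LinearMap.adjoint V (K (V (R w))), R w⟫ =
      ⟪z, w⟫ - c * ⟪K (V (R w)), V (R w)⟫ := by
  rw [inner_sub_left, real_inner_smul_left, LinearMap.adjoint_inner_left, R.inner_map_map]

theorem inner_map_sub_smul_adjoint_le (R : E ≃ₗᵢ[ℝ] E) {K : F →ₗ[ℝ] F}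
    (hK : ∀ x : F, 0 ≤ ⟪K x, x⟫) (V : E →ₗ[ℝ] F) {c : ℝ} (hc : 0 ≤ c) (z w : E) :
    ⟪R z - c • LinearMap.adjoint V (K (V (R w))), R w⟫ ≤ ⟪z, w⟫ := by
  rw [inner_map_sub_smul_adjoint_eq, sub_le_self_iff]
  exact mul_nonneg hc (hK _)

end CollisionLaw

theorem stmt_10_general (d : ℕ)
    {F : Type*} [NormedAddCommGroup F] [InnerProductSpace ℝ F] [FiniteDimensional ℝ F]
    (R : EuclideanSpace ℝ (Fin d) ≃ₗᵢ[ℝ] EuclideanSpace ℝ (Fin d))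
    (K : F →ₗ[ℝ] F)
    (hKpos : ∀ x : F, 0 ≤ ⟪K x, x⟫)
    (V₁ : EuclideanSpace ℝ (Fin d) →ₗ[ℝ] F)
    (cosφ : ℝ) (hcos : 0 ≤ cosφ)
    (Q : EuclideanSpace ℝ (Fin d) × EuclideanSpace ℝ (Fin d) → ℝ)
    (hQ : ∀ n, Q n = ⟪n.1, n.2⟫)
    (z w : EuclideanSpace ℝ (Fin d))
    (nminus nplus : EuclideanSpace ℝ (Fin d) × EuclideanSpace ℝ (Fin d))
    (hminus : nminus = (z, w))
    (hplus : nplus = (R z - (2 * cosφ) • (LinearMap.adjoint V₁) (K (V₁ (R w))), R w)) :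
    Q nplus = Q nminus - 2 * cosφ * ⟪K (V₁ (R w)), V₁ (R w)⟫ ∧ Q nplus ≤ Q nminus := by
  subst hminus hplus
  rw [hQ, hQ]
  exact ⟨inner_map_sub_smul_adjoint_eq R K V₁ _ z w,
    inner_map_sub_smul_adjoint_le R hKpos V₁ (by positivity) z w⟩

/-- For an orthogonal map `R`, a positive semi-definite symmetric
operator `K` on a subspace `F`, a linear map `V₁ : ℝ^d → F`, and `cos φ ≥ 0`,
the collision law `nminus = (z,w) ↦ nplus = (Rz - 2cos φ • V₁* K V₁ R w, Rw)` satisfies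
`Q(nplus) = Q(nminus) - 2cos φ ⟪K V₁ R w, V₁ R w⟫ ≤ Q(nminus)`, where `Q(z,w) = ⟪z,w⟫`. -/
theorem stmt_10 (d : ℕ)
    {F : Type*} [NormedAddCommGroup F] [InnerProductSpace ℝ F] [FiniteDimensional ℝ F]
    (R : EuclideanSpace ℝ (Fin d) ≃ₗᵢ[ℝ] EuclideanSpace ℝ (Fin d))
    (K : F →ₗ[ℝ] F) (hKsymm : LinearMap.IsSymmetric K)
    (hKpos : ∀ x : F, 0 ≤ ⟪K x, x⟫)
    (V₁ : EuclideanSpace ℝ (Fin d) →ₗ[ℝ] F)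
    (cosφ : ℝ) (hcos : 0 ≤ cosφ)
    (Q : EuclideanSpace ℝ (Fin d) × EuclideanSpace ℝ (Fin d) → ℝ)
    (hQ : ∀ n, Q n = ⟪n.1, n.2⟫)
    (z w : EuclideanSpace ℝ (Fin d))
    (nminus nplus : EuclideanSpace ℝ (Fin d) × EuclideanSpace ℝ (Fin d))
    (hminus : nminus = (z, w))
    (hplus : nplus = (R z - (2 * cosφ) • (LinearMap.adjoint V₁) (K (V₁ (R w))), R w)) :
    Q nplus = Q nminus - 2 * cosφ * ⟪K (V₁ (R w)), V₁ (R w)⟫ ∧ Q nplus ≤ Q nminus :=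
  stmt_10_general d R K hKpos V₁ cosφ hcos Q hQ z w nminus nplus hminus hplus
end
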